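/- For all reals s₁, s₂, s₃ > 0 and α > 0, with u(x) = x^α / (e^{x^α} − 1) and v(x) = x^α / (1 − e^{−x^α}), the expression E = u(s₁)u(s₂)·(v(s₂) − v(s₁)) + u(s₁)u(s₃)·(v(s₃) − v(s₁)) + u(s₃)u(s₂)·(v(s₂) − v(s₃)) is nonnegative whenever s₁ ≤ s₃ ≤ s₂ or s₁ ≤ s₂ ≤ s₃. -/

import Mathlib

/-!
Put `t = s ^ α`, which is increasing in `s`. Then `u` is `U(t) = t / (e^t - 1)`, the reciprocal of
the slope of the secant of `exp` through `0` and `t`; by convexity of `exp` this slope increases, so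
`U` decreases (on `t ≠ 0`). Moreover `t / (1 - e^{-t}) = U(-t)`, so `v` increases.

For nonnegative decreasing `u` and increasing `v`, all three terms are nonnegative when `s₃` lies
between `s₁` and `s₂`. When `s₁ ≤ s₂ ≤ s₃`, the sum regroups as
`u₁u₂(v₂ - v₁) + u₃(u₁ - u₂)(v₃ - v₁) + u₃u₂(v₂ - v₁)`.
-/

open Real Set

lemma monotoneOn_exp_sub_one_div : MonotoneOn (fun t : ℝ => (exp t - 1) / t) {0}ᶜ := by
  intro x hx y hy hxy
  simpa using convexOn_exp.secant_mono (mem_univ 0) (mem_univ x) (mem_univ y) hx hy hxy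

lemma exp_sub_one_div_pos {t : ℝ} (ht : t ≠ 0) : 0 < (exp t - 1) / t := by
  rcases ht.lt_or_gt with ht | ht
  · exact div_pos_of_neg_of_neg (by linarith [exp_lt_one_iff.mpr ht]) ht
  · exact div_pos (by linarith [add_one_lt_exp ht.ne']) ht

lemma div_exp_sub_one_pos {t : ℝ} (ht : t ≠ 0) : 0 < t / (exp t - 1) := by
  rw [← inv_div]
  exact inv_pos.mpr (exp_sub_one_div_pos ht)

lemma antitoneOn_div_exp_sub_one : AntitoneOn (fun t : ℝ => t / (exp t - 1)) {0}ᶜ := by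
  intro x hx y hy hxy
  simp only [← inv_div (exp _ - 1)]
  exact inv_anti₀ (exp_sub_one_div_pos hx) (monotoneOn_exp_sub_one_div hx hy hxy)

lemma monotoneOn_div_one_sub_exp_neg : MonotoneOn (fun t : ℝ => t / (1 - exp (-t))) {0}ᶜ := by
  intro x hx y hy hxy
  have h := antitoneOn_div_exp_sub_one (neg_ne_zero.mpr hy) (neg_ne_zero.mpr hx) (neg_le_neg hxy)
  simpa only [← neg_div_neg_eq y, ← neg_div_neg_eq x, neg_sub] using h

lemma nonneg_of_antitoneOn_of_monotoneOn {α : Type*} [Preorder α] {S : Set α} {u v : α → ℝ}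
    (hu : AntitoneOn u S) (hu₀ : ∀ x ∈ S, 0 ≤ u x) (hv : MonotoneOn v S) {a b c : α}
    (ha : a ∈ S) (hb : b ∈ S) (hc : c ∈ S) (hord : (a ≤ c ∧ c ≤ b) ∨ (a ≤ b ∧ b ≤ c)) :
    0 ≤ u a * u b * (v b - v a) + u a * u c * (v c - v a) +
      u c * u b * (v b - v c) := by
  have hua := hu₀ a ha
  have hub := hu₀ b hb
  have huc := hu₀ c hc
  rcases hord with ⟨hac, hcb⟩ | ⟨hab, hbc⟩
  · have hvac := sub_nonneg.mpr (hv ha hc hac)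
    have hvcb := sub_nonneg.mpr (hv hc hb hcb)
    have hvab := sub_nonneg.mpr (hv ha hb (hac.trans hcb))
    positivity
  · have hvab := sub_nonneg.mpr (hv ha hb hab)
    have hvac := sub_nonneg.mpr (hv ha hc (hab.trans hbc))
    have huab := sub_nonneg.mpr (hu ha hb hab)
    calc (0 : ℝ) ≤ u a * u b * (v b - v a) + u c * (u a - u b) * (v c - v a)
          + u c * u b * (v b - v a) := by positivity
      _ = _ := by ring

/-- For `s₁, s₂, s₃ > 0` and `α > 0`, with `u(x) = x^α / (e^{x^α} − 1)` and
`v(x) = x^α / (1 − e^{−x^α})`, the expression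
`u(s₁)u(s₂)(v(s₂) − v(s₁)) + u(s₁)u(s₃)(v(s₃) − v(s₁)) + u(s₃)u(s₂)(v(s₂) − v(s₃))`
is nonnegative whenever `s₁ ≤ s₃ ≤ s₂` or `s₁ ≤ s₂ ≤ s₃`. -/
theorem weibull_rhr_ratio_key_sign (α s₁ s₂ s₃ : ℝ) (hα : 0 < α)
    (hs₁ : 0 < s₁) (hs₂ : 0 < s₂) (hs₃ : 0 < s₃)
    (hord : (s₁ ≤ s₃ ∧ s₃ ≤ s₂) ∨ (s₁ ≤ s₂ ∧ s₂ ≤ s₃)) :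
    0 ≤
      (s₁ ^ α / (exp (s₁ ^ α) - 1)) * (s₂ ^ α / (exp (s₂ ^ α) - 1)) *
          (s₂ ^ α / (1 - exp (-(s₂ ^ α))) - s₁ ^ α / (1 - exp (-(s₁ ^ α)))) +
        (s₁ ^ α / (exp (s₁ ^ α) - 1)) * (s₃ ^ α / (exp (s₃ ^ α) - 1)) *
          (s₃ ^ α / (1 - exp (-(s₃ ^ α))) - s₁ ^ α / (1 - exp (-(s₁ ^ α)))) +
        (s₃ ^ α / (exp (s₃ ^ α) - 1)) * (s₂ ^ α / (exp (s₂ ^ α) - 1)) *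
          (s₂ ^ α / (1 - exp (-(s₂ ^ α))) - s₃ ^ α / (1 - exp (-(s₃ ^ α)))) := by
  have hpow_mono : MonotoneOn (· ^ α) (Ioi (0 : ℝ)) := fun x hx _ _ hxy =>
    rpow_le_rpow (le_of_lt hx) hxy hα.le
  have hpow_ne : ∀ s ∈ Ioi (0 : ℝ), s ^ α ≠ 0 := fun s hs => (rpow_pos_of_pos hs α).ne'
  have hu : AntitoneOn (fun s : ℝ => s ^ α / (exp (s ^ α) - 1)) (Ioi 0) := fun x hx y hy hxy =>
    antitoneOn_div_exp_sub_one (hpow_ne x hx) (hpow_ne y hy) (hpow_mono hx hy hxy)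
  have hv : MonotoneOn (fun s : ℝ => s ^ α / (1 - exp (-(s ^ α)))) (Ioi 0) := fun x hx y hy hxy =>
    monotoneOn_div_one_sub_exp_neg (hpow_ne x hx) (hpow_ne y hy) (hpow_mono hx hy hxy)
  have hu₀ : ∀ s ∈ Ioi (0 : ℝ), 0 ≤ s ^ α / (exp (s ^ α) - 1) := fun s hs =>
    (div_exp_sub_one_pos (hpow_ne s hs)).le
  exact nonneg_of_antitoneOn_of_monotoneOn hu hu₀ hv hs₁ hs₂ hs₃ hord
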